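/- arXiv:1511.00452 — 2 statements merged into one kernel-verified Lean document; each statement's English description precedes it below -/
import Mathlib

section
/- If |M| ≥ 3 and |W| ≥ 3, then no stable two-sides-querying matching rule is OSP-implementable for M (i.e., is implemented by a two-sides-querying mechanism that is OSP for every man); moreover, no stable two-sides-querying matching mechanism is OSP for more than two men. -/
/-- A preference list over `α` (a totally ordered subset of `α`), represented as a
duplicate-free list, most-preferred member first. Members of `α` not on the list
are unranked (unacceptable). -/
abbrev PrefList (α : Type) : Type := {l : List α // l.Nodup}

/-- `x ≻ y` according to `p`: `x` is ranked above `y` on `p`, or `x` appears on `p`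
while `y` does not. -/
def prefers {α : Type} (p : PrefList α) (x y : α) : Prop :=
  [x, y].Sublist p.val ∨ (x ∈ p.val ∧ y ∉ p.val)

/-- Strict preference over possible outcomes, where `none` means being unmatched:
being matched to someone on one's list is better than being unmatched, which is
better than being matched to someone not on one's list. -/
def outPrefers {α : Type} (p : PrefList α) : Option α → Option α → Prop
  | some x, some y => prefers p x y
  | some x, none => x ∈ p.val
  | none, some y => y ∉ p.val
  | none, none => False

/-- A preference list is full if it ranks every member of the opposite side. -/
def IsFull {α : Type} (p : PrefList α) : Prop := ∀ x : α, x ∈ p.val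

/-- A matching between `M` and `W`: a one-to-one mapping between a subset of `M`
and a subset of `W`, recorded as a partial injective function from men to women
(`μ.toFun m = none` meaning that `m` is unmatched). -/
structure Matching (M W : Type) where
  toFun : M → Option W
  inj : ∀ ⦃m m' : M⦄ ⦃w : W⦄, toFun m = some w → toFun m' = some w → m = m'

/-- Woman `w` strictly prefers man `m` (according to her list `q`) over the partner
matched to her by `μ` (or over remaining unmatched, if `μ` leaves her unmatched). -/
def womanPrefersOver {M W : Type} (q : PrefList M) (μ : Matching M W) (w : W) (m : M) : Prop :=
  (∃ m', μ.toFun m' = some w ∧ prefers q m m') ∨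
    ((∀ m', μ.toFun m' ≠ some w) ∧ m ∈ q.val)

/-- `μ` is stable with respect to men's profile `pbar` and women's profile `qbar`:
there is no man and woman each preferring the other over their match under `μ`, and
no participant is matched with a partner not on their preference list. -/
def IsStable {M W : Type} (pbar : M → PrefList W) (qbar : W → PrefList M)
    (μ : Matching M W) : Prop :=
  ¬ ((∃ m w, outPrefers (pbar m) (some w) (μ.toFun m) ∧ womanPrefersOver (qbar w) μ w m) ∨
     (∃ m w, μ.toFun m = some w ∧ (w ∉ (pbar m).val ∨ m ∉ (qbar w).val)))

/-- `C` is `qbar`-stable: `C pbar` is stable with respect to `pbar` and `qbar` for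
every men's profile `pbar`. -/
def IsStableRule {M W : Type} (qbar : W → PrefList M)
    (C : (M → PrefList W) → Matching M W) : Prop :=
  ∀ pbar, IsStable pbar qbar (C pbar)

/-- `C` is the `M`-optimal stable matching rule `C^qbar`: it maps each men's profile
`pbar` to a stable matching that every man weakly prefers to every stable matching. -/
def IsMOptimalStableRule {M W : Type} (qbar : W → PrefList M)
    (C : (M → PrefList W) → Matching M W) : Prop :=
  ∀ pbar, IsStable pbar qbar (C pbar) ∧
    ∀ μ, IsStable pbar qbar μ → ∀ m, ¬ outPrefers (pbar m) (μ.toFun m) ((C pbar).toFun m)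

/-- `C` is strategy-proof for man `m`. -/
def StrategyProofFor {M W : Type} [DecidableEq M]
    (C : (M → PrefList W) → Matching M W) (m : M) : Prop :=
  ∀ (pbar : M → PrefList W) (p' : PrefList W),
    ¬ outPrefers (pbar m) ((C (Function.update pbar m p')).toFun m) ((C pbar).toFun m)

/-- A women's profile `qbar` is cyclical if there are men `a`, `b`, `c` and women
`x`, `y` with `a ≻ₓ b ≻ₓ c ≻_y a`. -/
def Cyclical {M W : Type} (qbar : W → PrefList M) : Prop :=
  ∃ (a b c : M) (x y : W),
    prefers (qbar x) a b ∧ prefers (qbar x) b c ∧ prefers (qbar y) c a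

/-- A one-side-querying extensive-form matching mechanism for `M` over `W`: a rooted
tree each of whose leaves is labeled by a matching and each of whose internal nodes
queries a man; the edges out of an internal node querying `q` are the fibers of the
function `next` (two preference lists for `q` lie on the same outgoing edge iff they
are routed to the same subtree). -/
inductive Mech (M W : Type) : Type
  | leaf (μ : Matching M W)
  | node (q : M) (next : PrefList W → Mech M W)

/-- The matching rule implemented by a mechanism: route the profile from the root to
a leaf and output that leaf's matching. -/
def Mech.run {M W : Type} : Mech M W → (M → PrefList W) → Matching M W
  | .leaf μ, _ => μ
  | .node q next, pbar => (next (pbar q)).run pbar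

/-- Auxiliary definition of obvious strategy-proofness for man `m`: `P` is the set of
profiles passing through the current node. At each node querying `m`, for all profiles
`pbar`, `pbar'` passing through the node at which `m`'s lists diverge (are routed to
distinct subtrees), the outcome of `pbar'` is not strictly preferred (according to
`pbar m`) to the outcome of `pbar`. -/
def Mech.OSPAux {M W : Type} (m : M) : Mech M W → Set (M → PrefList W) → Prop
  | .leaf _, _ => True
  | .node q next, P =>
      (q = m → ∀ pbar ∈ P, ∀ pbar' ∈ P, next (pbar m) ≠ next (pbar' m) →
        ¬ outPrefers (pbar m) (((next (pbar' m)).run pbar').toFun m)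
            (((next (pbar m)).run pbar).toFun m)) ∧
      ∀ p : PrefList W, Mech.OSPAux m (next p) {pbar ∈ P | next (pbar q) = next p}

/-- `I` is obviously strategy-proof (OSP) for man `m`. -/
def Mech.OSPFor {M W : Type} (I : Mech M W) (m : M) : Prop :=
  Mech.OSPAux m I Set.univ

/-- A matching rule is OSP-implementable if it is implemented by some mechanism that
is OSP for every man. -/
def OSPImplementable {M W : Type} (C : (M → PrefList W) → Matching M W) : Prop :=
  ∃ I : Mech M W, (∀ m : M, I.OSPFor m) ∧ ∀ pbar, I.run pbar = C pbar

/-- A two-sides-querying extensive-form matching mechanism: internal nodes may query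
either a man (about his preference list over `W`) or a woman (about her preference
list over `M`). -/
inductive Mech2 (M W : Type) : Type
  | leaf (μ : Matching M W)
  | nodeM (q : M) (next : PrefList W → Mech2 M W)
  | nodeW (q : W) (next : PrefList M → Mech2 M W)

/-- The two-sides-querying matching rule implemented by a two-sides-querying mechanism. -/
def Mech2.run {M W : Type} :
    Mech2 M W → (M → PrefList W) → (W → PrefList M) → Matching M W
  | .leaf μ, _, _ => μ
  | .nodeM q next, pbar, qbar => (next (pbar q)).run pbar qbar
  | .nodeW q next, pbar, qbar => (next (qbar q)).run pbar qbar

/-- Auxiliary definition of obvious strategy-proofness of a two-sides-querying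
mechanism for man `m`; `P` is the set of two-sided profiles passing through the
current node. -/
def Mech2.OSPAux {M W : Type} (m : M) :
    Mech2 M W → Set ((M → PrefList W) × (W → PrefList M)) → Prop
  | .leaf _, _ => True
  | .nodeM q next, P =>
      (q = m → ∀ r ∈ P, ∀ r' ∈ P, next (r.1 m) ≠ next (r'.1 m) →
        ¬ outPrefers (r.1 m) (((next (r'.1 m)).run r'.1 r'.2).toFun m)
            (((next (r.1 m)).run r.1 r.2).toFun m)) ∧
      ∀ p : PrefList W, Mech2.OSPAux m (next p) {r ∈ P | next (r.1 q) = next p}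
  | .nodeW q next, P =>
      ∀ p : PrefList M, Mech2.OSPAux m (next p) {r ∈ P | next (r.2 q) = next p}

/-- A two-sides-querying mechanism `I` is obviously strategy-proof (OSP) for man `m`. -/
def Mech2.OSPForM {M W : Type} (I : Mech2 M W) (m : M) : Prop :=
  Mech2.OSPAux m I Set.univ

/-!
Let the women `x`, `y` rank `a ≻ b ≻ c` and `z` rank `b ≻ c ≻ a`; let `a` report `[z, x]` or
`[z, y]`, `b` report `[x, y]` or `[y, z]`, `c` report `[x]` or `[z, x]`, and everyone else report
nobody. For each of `a`, `b`, `c` two of these eight profiles, with different reports of his, fix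
his stable partner, and by the first of the two reports the second partner is strictly better.
So a node of an OSP mechanism querying him never separates his two reports, and all eight
profiles reach one leaf. But no matching is stable for both `([z, x], [x, y], [x])`, which forces
`a ↦ z`, and `([z, x], [x, y], [z, x])`, which forces `a ↦ x`.
-/

theorem prefers_of_val_eq_cons {α : Type} {p : PrefList α} {u w : α} {l : List α}
    (hp : p.val = u :: l) (hw : w ∈ l) : prefers p u w :=
  Or.inl (hp ▸ List.cons_sublist_cons.mpr (List.singleton_sublist.mpr hw))

theorem PrefList.eq_or_eq_of_val {α : Type} {p p₁ p₂ : PrefList α} {l₁ l₂ : List α}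
    (hp : p.val = l₁ ∨ p.val = l₂) (h₁ : p₁.val = l₁) (h₂ : p₂.val = l₂) :
    p = p₁ ∨ p = p₂ :=
  hp.imp (fun h => Subtype.ext (h.trans h₁.symm)) fun h => Subtype.ext (h.trans h₂.symm)

theorem not_prefers_self {α : Type} (p : PrefList α) (w : α) : ¬ prefers p w w := by
  rintro (h | h)
  · simpa using h.nodup p.property
  · exact h.2 h.1

namespace IsStable

variable {M W : Type} {pbar : M → PrefList W} {qbar : W → PrefList M} {μ : Matching M W}

theorem mem_of_toFun_eq (hμ : IsStable pbar qbar μ) {m : M} {w : W}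
    (hm : μ.toFun m = some w) : w ∈ (pbar m).val ∧ m ∈ (qbar w).val := by
  by_contra h
  exact hμ (Or.inr ⟨m, w, hm, by tauto⟩)

theorem not_outPrefers (hμ : IsStable pbar qbar μ) {m : M} {w : W} (hmw : m ∈ (qbar w).val)
    (hrivals : ∀ m', m' ≠ m → μ.toFun m' = some w → prefers (qbar w) m m') :
    ¬ outPrefers (pbar m) (some w) (μ.toFun m) := by
  intro hblock
  have hne : μ.toFun m ≠ some w := fun h => not_prefers_self _ w (h ▸ hblock)
  refine hμ (Or.inl ⟨m, w, hblock, ?_⟩)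
  by_cases hmatched : ∃ m', μ.toFun m' = some w
  · obtain ⟨m', hm'⟩ := hmatched
    exact Or.inl ⟨m', hm', hrivals m' (fun h => hne (h ▸ hm')) hm'⟩
  · exact Or.inr ⟨not_exists.mp hmatched, hmw⟩

theorem not_outPrefers_of_head (hμ : IsStable pbar qbar μ) {m : M} {w : W} {l : List M}
    (hw : (qbar w).val = m :: l) : ¬ outPrefers (pbar m) (some w) (μ.toFun m) := by
  refine hμ.not_outPrefers (by simp [hw]) fun m' hm' hm'w => prefers_of_val_eq_cons hw ?_
  have := (hμ.mem_of_toFun_eq hm'w).2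
  rw [hw] at this
  exact (List.mem_cons.mp this).resolve_left hm'

theorem toFun_eq_head (hμ : IsStable pbar qbar μ) {m : M} {w : W} {l : List W}
    (hm : (pbar m).val = w :: l) (hw : ¬ outPrefers (pbar m) (some w) (μ.toFun m)) :
    μ.toFun m = some w := by
  cases hμm : μ.toFun m with
  | none => exact absurd (by rw [hμm]; simp [outPrefers, hm]) hw
  | some w' =>
    by_contra hne
    have hw' := (hμ.mem_of_toFun_eq hμm).1
    rw [hm, List.mem_cons] at hw'
    refine hw ?_
    rw [hμm]
    exact prefers_of_val_eq_cons hm <| hw'.resolve_left fun h => hne (h ▸ rfl)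

theorem toFun_eq_or_eq (hμ : IsStable pbar qbar μ) {m : M} {u v : W}
    (hm : (pbar m).val = [u, v]) (hv : ¬ outPrefers (pbar m) (some v) (μ.toFun m)) :
    μ.toFun m = some u ∨ μ.toFun m = some v := by
  cases hμm : μ.toFun m with
  | none => exact absurd (by rw [hμm]; simp [outPrefers, hm]) hv
  | some w => simpa [hm] using (hμ.mem_of_toFun_eq hμm).1

theorem eq_or_eq_or_eq_of_toFun_eq (hμ : IsStable pbar qbar μ) {w : W} {m a b c : M}
    (hw : (qbar w).val = [a, b, c]) (hm : μ.toFun m = some w) : m = a ∨ m = b ∨ m = c := by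
  simpa [hw] using (hμ.mem_of_toFun_eq hm).2

end IsStable

def StablyPrefers {M W : Type} (qbar : W → PrefList M) (m : M) (r r' : M → PrefList W) : Prop :=
  ∀ μ μ', IsStable r qbar μ → IsStable r' qbar μ' →
    outPrefers (r m) (μ'.toFun m) (μ.toFun m)

/-- No node of an OSP mechanism separates the profiles of `F`: one querying `m ∈ A` would hand `m`
an obvious manipulation, one querying anyone else gets the same answer from all of them. So they
all reach one leaf, which cannot be stable for both profiles of `hleaf`. -/
theorem Mech2.not_forall_isStable_run {M W : Type} (qbar : W → PrefList M) (A : Set M)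
    (F : Set (M → PrefList W)) (hconst : ∀ m ∉ A, ∀ r ∈ F, ∀ r' ∈ F, r m = r' m)
    (hsplit : ∀ m ∈ A, ∃ r ∈ F, ∃ r' ∈ F,
      (∀ s ∈ F, s m = r m ∨ s m = r' m) ∧ StablyPrefers qbar m r r')
    (hleaf : ∃ r ∈ F, ∃ r' ∈ F, ∀ μ, IsStable r qbar μ → ¬ IsStable r' qbar μ) :
    ∀ (T : Mech2 M W) (P : Set ((M → PrefList W) × (W → PrefList M))),
      (∀ r ∈ F, (r, qbar) ∈ P) → (∀ m ∈ A, T.OSPAux m P) →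
      ¬ ∀ r ∈ F, IsStable r qbar (T.run r qbar) := by
  intro T
  induction T with
  | leaf μ =>
    obtain ⟨r, hr, r', hr', hdisjoint⟩ := hleaf
    exact fun _ _ _ hstable => hdisjoint μ (hstable r hr) (hstable r' hr')
  | nodeW w next ih =>
    intro P hP hOSP hstable
    exact ih (qbar w) {r ∈ P | next (r.2 w) = next (qbar w)} (fun r hr => ⟨hP r hr, rfl⟩)
      (fun m hm => hOSP m hm (qbar w)) hstable
  | nodeM q next ih =>
    intro P hP hOSP hstable
    have hjoint : ∃ p, ∀ s ∈ F, next (s q) = next p := by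
      by_cases hq : q ∈ A
      · obtain ⟨r, hr, r', hr', hcover, hbetter⟩ := hsplit q hq
        by_cases hsame : next (r q) = next (r' q)
        · exact ⟨r q, fun s hs => (hcover s hs).elim (congrArg next) (· ▸ hsame.symm)⟩
        · exact absurd (hbetter _ _ (hstable r hr) (hstable r' hr'))
            ((hOSP q hq).1 rfl _ (hP r hr) _ (hP r' hr') hsame)
      · obtain ⟨r, hr, -⟩ := hleaf
        exact ⟨r q, fun s hs => congrArg next (hconst q hq s hs r hr)⟩
    obtain ⟨p, hp⟩ := hjoint
    refine ih p {r ∈ P | next (r.1 q) = next p} (fun s hs => ⟨hP s hs, hp s hs⟩)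
      (fun m hm => (hOSP m hm).2 p) fun s hs => ?_
    simpa only [Mech2.run, hp s hs] using hstable s hs

section Cycle

variable {M W : Type} {pbar : M → PrefList W} {qbar : W → PrefList M} {μ : Matching M W}
  {a b c : M} {x y z : W}

-- The suffix of `cycle_l₁_l₂_l₃` spells the lists of `a`, `b`, `c`.

theorem IsStable.cycle_zl_xy_x (hμ : IsStable pbar qbar μ) (hxz : x ≠ z) (hyz : y ≠ z)
    (hqz : (qbar z).val = [b, c, a]) {l : List W} (ha : (pbar a).val = z :: l)
    (hb : (pbar b).val = [x, y]) (hc : (pbar c).val = [x]) : μ.toFun a = some z := by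
  refine hμ.toFun_eq_head ha (hμ.not_outPrefers (by simp [hqz]) fun m' hm'a hm'z => ?_)
  have hzm' := (hμ.mem_of_toFun_eq hm'z).1
  rcases hμ.eq_or_eq_or_eq_of_toFun_eq hqz hm'z with rfl | rfl | rfl
  · simp [hb, hxz.symm, hyz.symm] at hzm'
  · simp [hc, hxz.symm] at hzm'
  · exact absurd rfl hm'a

theorem IsStable.cycle_zx_xy_x (hμ : IsStable pbar qbar μ) (hbc : b ≠ c) (hxz : x ≠ z)
    (hyz : y ≠ z) (hqx : (qbar x).val = [a, b, c]) (hqz : (qbar z).val = [b, c, a])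
    (ha : (pbar a).val = [z, x]) (hb : (pbar b).val = [x, y]) (hc : (pbar c).val = [x]) :
    μ.toFun a = some z ∧ μ.toFun c = none := by
  have haz := hμ.cycle_zl_xy_x hxz hyz hqz ha hb hc
  refine ⟨haz, ?_⟩
  cases hcw : μ.toFun c with
  | none => rfl
  | some w =>
    have hwx : w = x := by simpa [hc] using (hμ.mem_of_toFun_eq hcw).1
    have hcx : μ.toFun c = some x := hwx ▸ hcw
    have hbx : μ.toFun b = some x := by
      refine hμ.toFun_eq_head hb (hμ.not_outPrefers (by simp [hqx]) fun m' hm'b hm'x => ?_)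
      rcases hμ.eq_or_eq_or_eq_of_toFun_eq hqx hm'x with rfl | rfl | rfl
      · simp [haz, hxz.symm] at hm'x
      · exact absurd rfl hm'b
      · exact Or.inl (by simp [hqx])
    exact absurd (μ.inj hbx hcx) hbc

theorem IsStable.cycle_zx_xy_zx (hμ : IsStable pbar qbar μ) (hab : a ≠ b) (hac : a ≠ c)
    (hxy : x ≠ y) (hxz : x ≠ z) (hyz : y ≠ z) (hqx : (qbar x).val = [a, b, c])
    (hqy : (qbar y).val = [a, b, c]) (hqz : (qbar z).val = [b, c, a])
    (ha : (pbar a).val = [z, x]) (hb : (pbar b).val = [x, y])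
    (hc : (pbar c).val = [z, x]) : μ.toFun a = some x ∧ μ.toFun b = some y := by
  have hcz : μ.toFun c = some z := by
    refine hμ.toFun_eq_head hc (hμ.not_outPrefers (by simp [hqz]) fun m' hm'c hm'z => ?_)
    have hzm' := (hμ.mem_of_toFun_eq hm'z).1
    rcases hμ.eq_or_eq_or_eq_of_toFun_eq hqz hm'z with rfl | rfl | rfl
    · simp [hb, hxz.symm, hyz.symm] at hzm'
    · exact absurd rfl hm'c
    · exact Or.inl (by simp [hqz])
  have hax : μ.toFun a = some x := by
    refine (hμ.toFun_eq_or_eq ha (hμ.not_outPrefers_of_head hqx)).resolve_left fun haz => ?_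
    exact hac (μ.inj haz hcz)
  refine ⟨hax, (hμ.toFun_eq_or_eq hb ?_).resolve_left fun hbx => hab (μ.inj hax hbx)⟩
  refine hμ.not_outPrefers (by simp [hqy]) fun m' hm'b hm'y => ?_
  rcases hμ.eq_or_eq_or_eq_of_toFun_eq hqy hm'y with rfl | rfl | rfl
  · simp [hax, hxy] at hm'y
  · exact absurd rfl hm'b
  · exact Or.inl (by simp [hqy])

theorem IsStable.cycle_zy_yz_zx (hμ : IsStable pbar qbar μ) (hab : a ≠ b) (hac : a ≠ c)
    (hbc : b ≠ c) (hxy : x ≠ y) (hxz : x ≠ z) (hqx : (qbar x).val = [a, b, c])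
    (hqy : (qbar y).val = [a, b, c]) (hqz : (qbar z).val = [b, c, a])
    (ha : (pbar a).val = [z, y]) (hb : (pbar b).val = [y, z])
    (hc : (pbar c).val = [z, x]) : μ.toFun b = some z ∧ μ.toFun c = some x := by
  have hnaz : μ.toFun a ≠ some z := by
    intro haz
    refine hac (μ.inj haz (hμ.toFun_eq_head hc (hμ.not_outPrefers (by simp [hqz]) ?_)))
    intro m' hm'c hm'z
    obtain rfl : m' = a := μ.inj hm'z haz
    exact Or.inl (by simp [hqz])
  have hay : μ.toFun a = some y :=
    (hμ.toFun_eq_or_eq ha (hμ.not_outPrefers_of_head hqy)).resolve_left hnaz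
  have hbz : μ.toFun b = some z :=
    (hμ.toFun_eq_or_eq hb (hμ.not_outPrefers_of_head hqz)).resolve_left
      fun hby => hab (μ.inj hay hby)
  refine ⟨hbz, (hμ.toFun_eq_or_eq hc ?_).resolve_left fun hcz => hbc (μ.inj hbz hcz)⟩
  refine hμ.not_outPrefers (by simp [hqx]) fun m' hm'c hm'x => ?_
  rcases hμ.eq_or_eq_or_eq_of_toFun_eq hqx hm'x with rfl | rfl | rfl
  · simp [hay, hxy.symm] at hm'x
  · simp [hbz, hxz.symm] at hm'x
  · exact absurd rfl hm'c

def cycleProfiles (a b c : M) (x y z : W) : Set (M → PrefList W) :=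
  {r | ((r a).val = [z, x] ∨ (r a).val = [z, y]) ∧
    ((r b).val = [x, y] ∨ (r b).val = [y, z]) ∧
    ((r c).val = [x] ∨ (r c).val = [z, x]) ∧
    ∀ m, m ≠ a → m ≠ b → m ≠ c → (r m).val = []}

theorem exists_mem_cycleProfiles (hab : a ≠ b) (hac : a ≠ c) (hbc : b ≠ c) (hxy : x ≠ y)
    (hxz : x ≠ z) (hyz : y ≠ z) {la lb lc : List W} (hla : la = [z, x] ∨ la = [z, y])
    (hlb : lb = [x, y] ∨ lb = [y, z]) (hlc : lc = [x] ∨ lc = [z, x]) :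
    ∃ r ∈ cycleProfiles a b c x y z, (r a).val = la ∧ (r b).val = lb ∧ (r c).val = lc := by
  classical
  have hna : la.Nodup := by rcases hla with rfl | rfl <;> simp [hxz.symm, hyz.symm]
  have hnb : lb.Nodup := by rcases hlb with rfl | rfl <;> simp [hxy, hyz]
  have hnc : lc.Nodup := by rcases hlc with rfl | rfl <;> simp [hxz.symm]
  refine ⟨fun m => if m = a then ⟨la, hna⟩ else if m = b then ⟨lb, hnb⟩
    else if m = c then ⟨lc, hnc⟩ else ⟨[], List.nodup_nil⟩, ?_⟩
  simp +contextual [cycleProfiles, hab.symm, hac.symm, hbc.symm, hla, hlb, hlc]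

theorem cycleProfiles_apply_eq {r r' : M → PrefList W} (hr : r ∈ cycleProfiles a b c x y z)
    (hr' : r' ∈ cycleProfiles a b c x y z) {m : M} (hm : m ∉ ({a, b, c} : Set M)) :
    r m = r' m := by
  simp only [Set.mem_insert_iff, Set.mem_singleton_iff, not_or] at hm
  exact Subtype.ext ((hr.2.2.2 m hm.1 hm.2.1 hm.2.2).trans (hr'.2.2.2 m hm.1 hm.2.1 hm.2.2).symm)

theorem cycleProfiles_stablyPrefers (hab : a ≠ b) (hac : a ≠ c) (hbc : b ≠ c) (hxy : x ≠ y)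
    (hxz : x ≠ z) (hyz : y ≠ z) {qbar : W → PrefList M} (hqx : (qbar x).val = [a, b, c])
    (hqy : (qbar y).val = [a, b, c]) (hqz : (qbar z).val = [b, c, a]) :
    ∀ m ∈ ({a, b, c} : Set M),
      ∃ r ∈ cycleProfiles a b c x y z, ∃ r' ∈ cycleProfiles a b c x y z,
        (∀ s ∈ cycleProfiles a b c x y z, s m = r m ∨ s m = r' m) ∧
        StablyPrefers qbar m r r' := by
  obtain ⟨r₁, hr₁, h₁a, h₁b, h₁c⟩ :=
    exists_mem_cycleProfiles hab hac hbc hxy hxz hyz (.inl rfl) (.inl rfl) (.inl rfl)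
  obtain ⟨r₂, hr₂, h₂a, h₂b, h₂c⟩ :=
    exists_mem_cycleProfiles hab hac hbc hxy hxz hyz (.inl rfl) (.inl rfl) (.inr rfl)
  obtain ⟨r₃, hr₃, h₃a, h₃b, h₃c⟩ :=
    exists_mem_cycleProfiles hab hac hbc hxy hxz hyz (.inr rfl) (.inl rfl) (.inl rfl)
  obtain ⟨r₄, hr₄, h₄a, h₄b, h₄c⟩ :=
    exists_mem_cycleProfiles hab hac hbc hxy hxz hyz (.inr rfl) (.inr rfl) (.inr rfl)
  rintro m (rfl | rfl | rfl)
  · refine ⟨r₂, hr₂, r₃, hr₃, fun s hs => PrefList.eq_or_eq_of_val hs.1 h₂a h₃a,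
      fun μ μ' hμ hμ' => ?_⟩
    rw [(hμ.cycle_zx_xy_zx hab hac hxy hxz hyz hqx hqy hqz h₂a h₂b h₂c).1,
      hμ'.cycle_zl_xy_x hxz hyz hqz h₃a h₃b h₃c]
    exact Or.inl (by simp [h₂a])
  · refine ⟨r₄, hr₄, r₂, hr₂,
      fun s hs => PrefList.eq_or_eq_of_val hs.2.1.symm h₄b h₂b, fun μ μ' hμ hμ' => ?_⟩
    rw [(hμ.cycle_zy_yz_zx hab hac hbc hxy hxz hqx hqy hqz h₄a h₄b h₄c).1,
      (hμ'.cycle_zx_xy_zx hab hac hxy hxz hyz hqx hqy hqz h₂a h₂b h₂c).2]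
    exact Or.inl (by simp [h₄b])
  · refine ⟨r₁, hr₁, r₄, hr₄, fun s hs => PrefList.eq_or_eq_of_val hs.2.2.1 h₁c h₄c,
      fun μ μ' hμ hμ' => ?_⟩
    rw [(hμ.cycle_zx_xy_x hbc hxz hyz hqx hqz h₁a h₁b h₁c).2,
      (hμ'.cycle_zy_yz_zx hab hac hbc hxy hxz hqx hqy hqz h₄a h₄b h₄c).2]
    simp [outPrefers, h₁c]

theorem cycleProfiles_not_isStable (hab : a ≠ b) (hac : a ≠ c) (hbc : b ≠ c) (hxy : x ≠ y)
    (hxz : x ≠ z) (hyz : y ≠ z) {qbar : W → PrefList M} (hqx : (qbar x).val = [a, b, c])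
    (hqy : (qbar y).val = [a, b, c]) (hqz : (qbar z).val = [b, c, a]) :
    ∃ r ∈ cycleProfiles a b c x y z, ∃ r' ∈ cycleProfiles a b c x y z,
      ∀ μ, IsStable r qbar μ → ¬ IsStable r' qbar μ := by
  obtain ⟨r₁, hr₁, h₁a, h₁b, h₁c⟩ :=
    exists_mem_cycleProfiles hab hac hbc hxy hxz hyz (.inl rfl) (.inl rfl) (.inl rfl)
  obtain ⟨r₂, hr₂, h₂a, h₂b, h₂c⟩ :=
    exists_mem_cycleProfiles hab hac hbc hxy hxz hyz (.inl rfl) (.inl rfl) (.inr rfl)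
  refine ⟨r₁, hr₁, r₂, hr₂, fun μ h₁μ h₂μ => hxz (Option.some.inj ?_)⟩
  rw [← (h₂μ.cycle_zx_xy_zx hab hac hxy hxz hyz hqx hqy hqz h₂a h₂b h₂c).1,
    (h₁μ.cycle_zx_xy_x hbc hxz hyz hqx hqz h₁a h₁b h₁c).1]

theorem exists_womenProfile_cyclic (hab : a ≠ b) (hac : a ≠ c) (hbc : b ≠ c) (hxz : x ≠ z)
    (hyz : y ≠ z) :
    ∃ qbar : W → PrefList M,
      (qbar x).val = [a, b, c] ∧ (qbar y).val = [a, b, c] ∧ (qbar z).val = [b, c, a] := by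
  classical
  exact ⟨fun w => if w = z then ⟨[b, c, a], by simp [hbc, hab.symm, hac.symm]⟩
    else ⟨[a, b, c], by simp [hab, hac, hbc]⟩, by simp [hxz, hyz]⟩

end Cycle

theorem Mech2.not_forall_isStable_run_of_OSPForM {M W : Type} {a b c : M} {x y z : W}
    (hab : a ≠ b) (hac : a ≠ c) (hbc : b ≠ c) (hxy : x ≠ y) (hxz : x ≠ z) (hyz : y ≠ z)
    (I : Mech2 M W) (ha : I.OSPForM a) (hb : I.OSPForM b) (hc : I.OSPForM c) :
    ¬ ∀ pbar qbar, IsStable pbar qbar (I.run pbar qbar) := by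
  intro hstable
  obtain ⟨qbar, hqx, hqy, hqz⟩ := exists_womenProfile_cyclic hab hac hbc hxz hyz
  refine Mech2.not_forall_isStable_run qbar {a, b, c} (cycleProfiles a b c x y z)
    (fun m hm r hr r' hr' => cycleProfiles_apply_eq hr hr' hm)
    (cycleProfiles_stablyPrefers hab hac hbc hxy hxz hyz hqx hqy hqz)
    (cycleProfiles_not_isStable hab hac hbc hxy hxz hyz hqx hqy hqz) I Set.univ
    (fun _ _ => trivial) ?_ fun r _ => hstable r qbar
  rintro m (rfl | rfl | rfl) <;> assumption

/-- If `|M| ≥ 3` and `|W| ≥ 3`, then no stable two-sides-querying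
matching rule is OSP-implementable for `M` (is implemented by a two-sides-querying
mechanism OSP for every man); moreover, no stable two-sides-querying matching
mechanism is OSP for more than two men. -/
theorem no_stable_two_sided_OSP
    {M W : Type} [Fintype M] [Fintype W]
    (hM : 3 ≤ Fintype.card M) (hW : 3 ≤ Fintype.card W) :
    (∀ C : (M → PrefList W) → (W → PrefList M) → Matching M W,
        (∀ pbar qbar, IsStable pbar qbar (C pbar qbar)) →
        ¬ ∃ I : Mech2 M W, (∀ m : M, I.OSPForM m) ∧
            ∀ pbar qbar, I.run pbar qbar = C pbar qbar) ∧
      (∀ I : Mech2 M W,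
        (∀ pbar qbar, IsStable pbar qbar (I.run pbar qbar)) →
        ¬ ∃ a b c : M, a ≠ b ∧ a ≠ c ∧ b ≠ c ∧
            I.OSPForM a ∧ I.OSPForM b ∧ I.OSPForM c) := by
  obtain ⟨x, y, z, hxy, hxz, hyz⟩ := Fintype.two_lt_card_iff.mp hW
  have hthree : ∀ I : Mech2 M W, (∀ pbar qbar, IsStable pbar qbar (I.run pbar qbar)) →
      ¬ ∃ a b c : M, a ≠ b ∧ a ≠ c ∧ b ≠ c ∧
        I.OSPForM a ∧ I.OSPForM b ∧ I.OSPForM c := by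
    rintro I hstable ⟨a, b, c, hab, hac, hbc, ha, hb, hc⟩
    exact Mech2.not_forall_isStable_run_of_OSPForM hab hac hbc hxy hxz hyz I ha hb hc hstable
  refine ⟨fun C hC ⟨I, hOSP, hrun⟩ => ?_, hthree⟩
  obtain ⟨a, b, c, hab, hac, hbc⟩ := Fintype.two_lt_card_iff.mp hM
  exact hthree I (fun pbar qbar => hrun pbar qbar ▸ hC pbar qbar)
    ⟨a, b, c, hab, hac, hbc, hOSP a, hOSP b, hOSP c⟩
end

section
/- If |M| = 2, then the two-sides-querying M-optimal stable matching rule (mapping each pair (p̄, q̄) of preference profiles to the M-optimal stable matching with respect to p̄ and q̄) is OSP-implementable for M, i.e., it is implemented by some two-sides-querying matching mechanism that is OSP for every man. -/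
/-- `C` is the two-sides-querying M-optimal stable matching rule: it maps each pair
of profiles to a stable matching that every man weakly prefers to every stable
matching. -/
def IsMOptimalStableRule2 {M W : Type}
    (C : (M → PrefList W) → (W → PrefList M) → Matching M W) : Prop :=
  ∀ pbar qbar, IsStable pbar qbar (C pbar qbar) ∧
    ∀ μ, IsStable pbar qbar μ →
      ∀ m, ¬ outPrefers (pbar m) (μ.toFun m) ((C pbar qbar).toFun m)

/-!
The women need not be obviously strategy-proof, so the mechanism first asks every woman for her
list; afterwards the women's profile is known. Say that a man `a` *clinches* `w` against the
other man `b` if `w` is his favourite among the women accepting him and she does not prefer `b`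
to him. For two men, the men-optimal stable matching gives each man his favourite among the
women accepting him that the other man does not clinch: each man chooses from a menu fixed by
the other's list. The mechanism asks `a` whether he clinches some woman. If he does, that woman
is his best possible outcome; otherwise no one contests `b`'s favourite acceptable woman, so `b`
is asked next and gets her. In both cases the remaining man is asked last and gets the best
woman on his menu. So at every query the truthful answer gets the best outcome still possible.
-/
namespace List

variable {α : Type} {l : List α} {x y : α}

theorem Nodup.not_pair_sublist_swap (hn : l.Nodup) (h : [x, y].Sublist l) :
    ¬ [y, x].Sublist l := by
  induction l with
  | nil => simp
  | cons a t ih =>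
    simp only [List.nodup_cons] at hn
    simp only [List.sublist_cons_iff] at *
    grind

theorem pair_sublist_or_pair_sublist (hx : x ∈ l) (hy : y ∈ l) (hxy : x ≠ y) :
    [x, y].Sublist l ∨ [y, x].Sublist l := by
  induction l with
  | nil => simp at hx
  | cons a t ih =>
    simp only [List.sublist_cons_iff, List.mem_cons] at *
    grind

theorem Nodup.find?_eq_false_of_pair_sublist {P : α → Bool} (hn : l.Nodup)
    (hf : l.find? P = some y) (hs : [x, y].Sublist l) : P x = false := by
  induction l with
  | nil => simp at hf
  | cons a t ih =>
    simp only [List.nodup_cons] at hn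
    simp only [List.find?_cons, List.sublist_cons_iff] at *
    grind [List.mem_of_find?_eq_some]

end List

section Preferences

variable {α : Type} {p : PrefList α} {x y : α}

theorem prefers.mem_left (h : prefers p x y) : x ∈ p.val :=
  h.elim (fun hs => hs.subset (by simp)) And.left

theorem prefers.asymm (h : prefers p x y) : ¬ prefers p y x := by
  rintro (hs | ⟨hy, hx⟩)
  · rcases h with h | ⟨-, hy⟩
    · exact p.2.not_pair_sublist_swap h hs
    · exact hy (hs.subset (by simp))
  · exact hx h.mem_left

theorem prefers_or_prefers_of_ne (hx : x ∈ p.val) (hy : y ∈ p.val) (hxy : x ≠ y) :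
    prefers p x y ∨ prefers p y x :=
  (List.pair_sublist_or_pair_sublist hx hy hxy).imp Or.inl Or.inl

theorem outPrefers_or_outPrefers_of_ne {o o' : Option α} (ho : ∀ x, o = some x → x ∈ p.val)
    (ho' : ∀ x, o' = some x → x ∈ p.val) (hne : o ≠ o') :
    outPrefers p o o' ∨ outPrefers p o' o := by
  cases o with
  | none => cases o' with
    | none => exact absurd rfl hne
    | some y => exact Or.inr (ho' y rfl)
  | some x => cases o' with
    | none => exact Or.inl (ho x rfl)
    | some y => exact prefers_or_prefers_of_ne (ho x rfl) (ho' y rfl) (by grind)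

end Preferences

namespace PrefList

variable {α : Type} {p : PrefList α} {S T : α → Prop} {x : α} {o : Option α}

open Classical in
noncomputable def best (p : PrefList α) (S : α → Prop) : Option α :=
  p.val.find? fun a => decide (S a)

theorem best_spec (h : p.best S = some x) : x ∈ p.val ∧ S x := by
  unfold best at h
  exact ⟨List.mem_of_find?_eq_some h, by simpa using List.find?_some h⟩

theorem not_of_best_eq_none (h : p.best S = none) (hx : x ∈ p.val) : ¬ S x := by
  unfold best at h
  simpa using List.find?_eq_none.1 h x hx

theorem not_outPrefers_best (h : ∀ x, o = some x → S x) : ¬ outPrefers p o (p.best S) := by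
  cases hb : p.best S with
  | none => cases o with
    | none => exact id
    | some x => exact fun hx => not_of_best_eq_none hb hx (h x rfl)
  | some y => cases o with
    | none => exact fun hy => hy (best_spec hb).1
    | some x =>
      rintro (hs | ⟨-, hy⟩)
      · unfold best at hb
        simpa [h x rfl] using p.2.find?_eq_false_of_pair_sublist hb hs
      · exact hy (best_spec hb).1

theorem eq_best_of_not_outPrefers (hopt : ¬ outPrefers p (p.best S) o)
    (ho : ∀ x, o = some x → x ∈ p.val ∧ S x) : o = p.best S := by
  by_contra hne
  rcases outPrefers_or_outPrefers_of_ne (fun x hx => (ho x hx).1)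
    (fun x hx => (best_spec hx).1) hne with h | h
  · exact not_outPrefers_best (fun x hx => (ho x hx).2) h
  · exact hopt h

theorem best_eq_of_imp (hTS : ∀ x, T x → S x) (h : p.best S = some x) (hx : T x) :
    p.best T = some x := by
  refine (eq_best_of_not_outPrefers (S := T) (o := some x) ?_ ?_).symm
  · exact h ▸ not_outPrefers_best fun y hy => hTS y (best_spec hy).2
  · exact fun y hy => by cases hy; exact ⟨(best_spec h).1, hx⟩

end PrefList

section Stability

variable {M W : Type} {pbar : M → PrefList W} {qbar : W → PrefList M} {μ : Matching M W}
  {m o : M} {w : W}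

abbrev AcceptedBy (qbar : W → PrefList M) (m : M) (w : W) : Prop := m ∈ (qbar w).val

theorem womanPrefersOver.mem {q : PrefList M} (h : womanPrefersOver q μ w m) : m ∈ q.val :=
  h.elim (fun ⟨_, _, hp⟩ => hp.mem_left) And.right

theorem IsStable.acceptable (h : IsStable pbar qbar μ) (hm : μ.toFun m = some w) :
    w ∈ (pbar m).val ∧ m ∈ (qbar w).val := by
  by_contra hbad
  exact h (Or.inr ⟨m, w, hm, not_and_or.1 hbad⟩)

theorem isStable_intro
    (hacc : ∀ m w, μ.toFun m = some w → w ∈ (pbar m).val ∧ m ∈ (qbar w).val)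
    (htaken : ∀ m w, outPrefers (pbar m) (some w) (μ.toFun m) → m ∈ (qbar w).val →
      ∃ m', μ.toFun m' = some w ∧ ¬ prefers (qbar w) m m') :
    IsStable pbar qbar μ := by
  rintro (⟨m, w, hpref, hwo⟩ | ⟨m, w, hm, hbad⟩)
  · obtain ⟨m', hm', hnp⟩ := htaken m w hpref hwo.mem
    rcases hwo with ⟨m'', hm'', hp⟩ | ⟨hfree, -⟩
    · exact hnp (μ.inj hm'' hm' ▸ hp)
    · exact hfree m' hm'
  · have := hacc m w hm
    tauto

theorem IsStable.not_outPrefers_best_acceptedBy (h : IsStable pbar qbar μ) (p : PrefList W) :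
    ¬ outPrefers p (μ.toFun m) (p.best (AcceptedBy qbar m)) :=
  PrefList.not_outPrefers_best fun _ hw => (h.acceptable hw).2

theorem IsStable.prefers_of_best_acceptedBy (h : IsStable pbar qbar μ)
    (ho : (pbar o).best (AcceptedBy qbar o) = some w) (hm : μ.toFun m = some w) (hmo : m ≠ o) :
    prefers (qbar w) m o := by
  obtain ⟨hwo, how⟩ := PrefList.best_spec ho
  rcases prefers_or_prefers_of_ne (h.acceptable hm).2 how hmo with hmo' | hom
  · exact hmo'
  -- otherwise `o` and `w` block `μ`
  have hno : μ.toFun o ≠ some w := fun hno => hmo (μ.inj hm hno)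
  have hbetter : outPrefers (pbar o) (some w) (μ.toFun o) := by
    rcases outPrefers_or_outPrefers_of_ne (p := pbar o) (fun x hx => (h.acceptable hx).1)
      (fun x hx => by cases hx; exact hwo) hno with hworse | hbetter
    · exact absurd (ho ▸ hworse) (h.not_outPrefers_best_acceptedBy _)
    · exact hbetter
  exact absurd (Or.inl ⟨o, w, hbetter, Or.inl ⟨m, hm, hom⟩⟩) h

end Stability

section TwoMen

variable {M W : Type} (qbar : W → PrefList M) {a b : M} {pa pb : PrefList W} {w : W}

def Clinches (a b : M) (pa : PrefList W) (w : W) : Prop :=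
  pa.best (AcceptedBy qbar a) = some w ∧ ¬ prefers (qbar w) b a

def Available (a b : M) (pb : PrefList W) (w : W) : Prop :=
  AcceptedBy qbar a w ∧ ¬ Clinches qbar b a pb w

variable {qbar}

theorem Clinches.not_clinches (hab : a ≠ b) (h : Clinches qbar a b pa w) :
    ¬ Clinches qbar b a pb w := fun h' =>
  (prefers_or_prefers_of_ne (PrefList.best_spec h.1).2 (PrefList.best_spec h'.1).2 hab).elim
    h'.2 h.2

theorem Clinches.best_available (hab : a ≠ b) (h : Clinches qbar a b pa w) :
    pa.best (Available qbar a b pb) = some w :=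
  PrefList.best_eq_of_imp (fun _ hv => hv.1) h.1
    ⟨(PrefList.best_spec h.1).2, h.not_clinches hab⟩

theorem clinches_of_outPrefers_best_available
    (h : outPrefers pa (some w) (pa.best (Available qbar a b pb))) (hw : AcceptedBy qbar a w) :
    Clinches qbar b a pb w := by
  by_contra hc
  exact PrefList.not_outPrefers_best (fun _ hx => by cases hx; exact ⟨hw, hc⟩) h

theorem best_acceptedBy_of_best_available (hab : a ≠ b)
    (ha : pa.best (Available qbar a b pb) = some w)
    (hb : pb.best (Available qbar b a pa) = some w) :
    pa.best (AcceptedBy qbar a) = some w := by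
  obtain ⟨hwa, hacc, -⟩ := PrefList.best_spec ha
  cases ht : pa.best (AcceptedBy qbar a) with
  | none => exact absurd hacc (PrefList.not_of_best_eq_none ht hwa)
  | some t =>
    by_cases hav : Available qbar a b pb t
    · have hwt : some w = some t := ht ▸ PrefList.eq_best_of_not_outPrefers
        (ht ▸ ha ▸ PrefList.not_outPrefers_best fun x hx => by cases hx; exact hav)
        (fun x hx => by cases hx; exact ⟨hwa, hacc⟩)
      exact hwt.symm
    · have hc : Clinches qbar b a pb t := by
        by_contra hc
        exact hav ⟨(PrefList.best_spec ht).2, hc⟩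
      exact (hb.symm.trans (hc.best_available hab.symm)).symm

theorem best_available_ne (hab : a ≠ b) (ha : pa.best (Available qbar a b pb) = some w) :
    pb.best (Available qbar b a pa) ≠ some w := by
  intro hb
  by_cases hba : prefers (qbar w) b a
  · exact (PrefList.best_spec ha).2.2
      ⟨best_acceptedBy_of_best_available hab.symm hb ha, hba.asymm⟩
  · exact (PrefList.best_spec hb).2.2 ⟨best_acceptedBy_of_best_available hab ha hb, hba⟩

end TwoMen

section TwoMenOptimal

variable {M W : Type} {a b : M}

open Classical in
noncomputable def availableMatching (qbar : W → PrefList M) (pbar : M → PrefList W)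
    (hab : a ≠ b) (hall : ∀ m, m = a ∨ m = b) : Matching M W where
  toFun m := if m = a then (pbar a).best (Available qbar a b (pbar b))
    else (pbar b).best (Available qbar b a (pbar a))
  inj m m' w hm hm' := by
    rcases hall m with rfl | rfl <;> rcases hall m' with rfl | rfl <;>
      simp only [if_pos, if_neg hab.symm] at hm hm'
    · rfl
    · exact absurd hm' (best_available_ne hab hm)
    · exact absurd hm (best_available_ne hab hm')
    · rfl

theorem availableMatching_toFun {qbar : W → PrefList M} {pbar : M → PrefList W} (hab : a ≠ b)
    (hall : ∀ m, m = a ∨ m = b) (m : M) : ∃ o, (m = a ∧ o = b ∨ m = b ∧ o = a) ∧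
    (availableMatching qbar pbar hab hall).toFun m =
      (pbar m).best (Available qbar m o (pbar o)) := by
  rcases hall m with rfl | rfl
  · exact ⟨b, by simp, if_pos rfl⟩
  · exact ⟨a, by simp, if_neg hab.symm⟩

theorem isStable_availableMatching {qbar : W → PrefList M} {pbar : M → PrefList W}
    (hab : a ≠ b) (hall : ∀ m, m = a ∨ m = b) :
    IsStable pbar qbar (availableMatching qbar pbar hab hall) := by
  apply isStable_intro
  · intro m w hm
    obtain ⟨o, -, hE⟩ := availableMatching_toFun hab hall m
    rw [hE] at hm
    exact ⟨(PrefList.best_spec hm).1, (PrefList.best_spec hm).2.1⟩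
  · intro m w hpref hw
    obtain ⟨o, hmo, hE⟩ := availableMatching_toFun hab hall m
    rw [hE] at hpref
    have hc := clinches_of_outPrefers_best_available hpref hw
    obtain ⟨o', ho, hE'⟩ := availableMatching_toFun hab hall o
    obtain rfl : o' = m := by grind
    exact ⟨o, hE' ▸ hc.best_available (by grind), hc.2⟩

theorem IsMOptimalStableRule2.toFun_eq_best_available
    {C : (M → PrefList W) → (W → PrefList M) → Matching M W} (hC : IsMOptimalStableRule2 C)
    (hab : a ≠ b) (hall : ∀ m, m = a ∨ m = b) (pbar : M → PrefList W)
    (qbar : W → PrefList M) :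
    (C pbar qbar).toFun a = (pbar a).best (Available qbar a b (pbar b)) := by
  obtain ⟨hstable, hopt⟩ := hC pbar qbar
  have hE : (availableMatching qbar pbar hab hall).toFun a =
      (pbar a).best (Available qbar a b (pbar b)) := if_pos rfl
  refine PrefList.eq_best_of_not_outPrefers
    (hE ▸ hopt _ (isStable_availableMatching hab hall) a) fun w hw => ?_
  obtain ⟨hwa, haw⟩ := hstable.acceptable hw
  refine ⟨hwa, haw, fun hc => hc.2 ?_⟩
  exact hstable.prefers_of_best_acceptedBy hc.1 hw hab

end TwoMenOptimal

namespace IsMOptimalStableRule2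

variable {M W : Type} {C : (M → PrefList W) → (W → PrefList M) → Matching M W}
  {a b : M} {pbar : M → PrefList W} {qbar : W → PrefList M} {w : W}

theorem strategyProofFor [DecidableEq M] (hC : IsMOptimalStableRule2 C) (hab : a ≠ b)
    (hall : ∀ m, m = a ∨ m = b) (qbar : W → PrefList M) :
    StrategyProofFor (fun pbar => C pbar qbar) a := by
  intro pbar p
  simp only [hC.toFun_eq_best_available hab hall, Function.update_self,
    Function.update_of_ne hab.symm]
  exact PrefList.not_outPrefers_best fun _ hw => (PrefList.best_spec hw).2

theorem toFun_eq_of_clinches (hC : IsMOptimalStableRule2 C) (hab : a ≠ b)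
    (hall : ∀ m, m = a ∨ m = b) (h : Clinches qbar a b (pbar a) w) :
    (C pbar qbar).toFun a = some w := by
  rw [hC.toFun_eq_best_available hab hall]
  exact h.best_available hab

theorem toFun_eq_best_acceptedBy (hC : IsMOptimalStableRule2 C) (hab : a ≠ b)
    (hall : ∀ m, m = a ∨ m = b) (h : ∀ w, ¬ Clinches qbar a b (pbar a) w) :
    (C pbar qbar).toFun b = (pbar b).best (AcceptedBy qbar b) := by
  rw [hC.toFun_eq_best_available hab.symm (fun m => (hall m).symm)]
  congr 1
  ext w
  simp only [Available, h, not_false_eq_true, and_true]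

end IsMOptimalStableRule2

theorem update_const_eq_update {M W : Type} [DecidableEq M] {a b : M}
    (hall : ∀ m, m = a ∨ m = b) (pbar : M → PrefList W) (p : PrefList W) :
    Function.update (fun _ => pbar a) b p = Function.update pbar b p := by
  funext m
  rcases hall m with rfl | rfl <;> simp [Function.update_apply]

namespace Mech2

variable {M W : Type} {R : (M → PrefList W) → Matching M W} {a b m : M}
  {S : PrefList W → Prop} {T₁ T₂ : Mech2 M W}

open Classical in
noncomputable def branch (a : M) (S : PrefList W → Prop) (T₁ T₂ : Mech2 M W) : Mech2 M W :=
  nodeM a fun p => if S p then T₁ else T₂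

theorem run_ite (h₁ : ∀ pbar qbar, T₁.run pbar qbar = R pbar)
    (h₂ : ∀ pbar qbar, T₂.run pbar qbar = R pbar) (p : PrefList W) [Decidable (S p)]
    (pbar : M → PrefList W) (qbar : W → PrefList M) :
    (if S p then T₁ else T₂).run pbar qbar = R pbar := by
  split_ifs
  exacts [h₁ pbar qbar, h₂ pbar qbar]

theorem run_branch (h₁ : ∀ pbar qbar, T₁.run pbar qbar = R pbar)
    (h₂ : ∀ pbar qbar, T₂.run pbar qbar = R pbar) (pbar : M → PrefList W)
    (qbar : W → PrefList M) : (branch a S T₁ T₂).run pbar qbar = R pbar := by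
  simp only [branch, run, run_ite h₁ h₂]

theorem ospAux_branch (hT : T₁ ≠ T₂) (h₁ : ∀ pbar qbar, T₁.run pbar qbar = R pbar)
    (h₂ : ∀ pbar qbar, T₂.run pbar qbar = R pbar)
    {P : Set ((M → PrefList W) × (W → PrefList M))}
    (hroot : ∀ r ∈ P, ∀ r' ∈ P, S (r.1 a) → ¬ S (r'.1 a) →
      ¬ outPrefers (r.1 a) ((R r'.1).toFun a) ((R r.1).toFun a) ∧
        ¬ outPrefers (r'.1 a) ((R r.1).toFun a) ((R r'.1).toFun a))
    (hT₁ : ∀ Q : Set _, (∀ r ∈ Q, S (r.1 a)) → OSPAux m T₁ Q)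
    (hT₂ : ∀ Q : Set _, (∀ r ∈ Q, ¬ S (r.1 a)) → OSPAux m T₂ Q) :
    OSPAux m (branch a S T₁ T₂) P := by
  classical
  simp only [branch, OSPAux]
  refine ⟨fun hm r hr r' hr' hne => ?_, fun p => ?_⟩
  · subst hm
    simp only [run_ite h₁ h₂]
    by_cases hr₁ : S (r.1 a) <;> by_cases hr₁' : S (r'.1 a) <;>
      simp only [hr₁, hr₁', if_true, if_false, ne_eq, not_true_eq_false] at hne
    exacts [(hroot r hr r' hr' hr₁ hr₁').1, (hroot r' hr' r hr hr₁' hr₁).2]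
  · by_cases hp : S p
    · rw [if_pos hp]
      refine hT₁ _ fun r hr => ?_
      by_contra hn
      exact hT.symm (by simpa [hn] using hr.2)
    · rw [if_neg hp]
      refine hT₂ _ fun r hr hn => ?_
      exact hT (by simpa [hn] using hr.2)

section QueryWomen

variable [DecidableEq W]

def queryWomen (k : (W → PrefList M) → Mech2 M W) :
    List W → (W → PrefList M) → Mech2 M W
  | [], f => k f
  | w :: ws, f => nodeW w fun q => queryWomen k ws (Function.update f w q)

variable {k : (W → PrefList M) → Mech2 M W}

theorem run_queryWomen (pbar : M → PrefList W) (qbar : W → PrefList M) :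
    ∀ (ws : List W) (f : W → PrefList M), (∀ w ∉ ws, f w = qbar w) →
      (queryWomen k ws f).run pbar qbar = (k qbar).run pbar qbar
  | [], f, hf => by rw [queryWomen, funext fun w => hf w List.not_mem_nil]
  | w :: ws, f, hf => by
    refine run_queryWomen pbar qbar ws _ fun w' hw' => ?_
    by_cases h : w' = w
    · subst h; simp
    · rw [Function.update_of_ne h]
      exact hf w' (by simp [h, hw'])

theorem ospAux_queryWomen (hk : ∀ f P, OSPAux m (k f) P) :
    ∀ (ws : List W) (f : W → PrefList M) P, OSPAux m (queryWomen k ws f) P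
  | [], f, P => hk f P
  | _ :: ws, _, _ => fun _ => ospAux_queryWomen hk ws _ _

end QueryWomen

section AskBoth

variable [DecidableEq M]

def askBoth (a b : M) (R : (M → PrefList W) → Matching M W) : Mech2 M W :=
  nodeM a fun pa => nodeM b fun pb => leaf (R (Function.update (fun _ => pa) b pb))

theorem run_askBoth (hall : ∀ m, m = a ∨ m = b) (pbar : M → PrefList W)
    (qbar : W → PrefList M) : (askBoth a b R).run pbar qbar = R pbar := by
  simp only [askBoth, run, update_const_eq_update hall, Function.update_eq_self]

theorem ospAux_askBoth (hall : ∀ m, m = a ∨ m = b)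
    {Q : Set ((M → PrefList W) × (W → PrefList M))}
    (ha : ∀ r ∈ Q, ∀ r' ∈ Q, ¬ outPrefers (r.1 a) ((R r'.1).toFun a) ((R r.1).toFun a))
    (hb : StrategyProofFor R b) : OSPAux m (askBoth a b R) Q := by
  simp only [askBoth, OSPAux]
  refine ⟨fun hm r hr r' hr' _ => ?_,
    fun pa => ⟨fun hm r hr r' hr' _ => ?_, fun _ => trivial⟩⟩
  · subst hm
    simpa only [run, update_const_eq_update hall, Function.update_eq_self] using ha r hr r' hr'
  · subst hm
    have hR : ∀ p, R (Function.update (fun _ => r.1 a) b p) =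
        R (Function.update (fun _ => pa) b p) := fun p => by
      injection hr.2 with _ hnext
      injection congrFun hnext p
    simp only [run, ← hR, update_const_eq_update hall, Function.update_eq_self]
    exact hb r.1 (r'.1 b)

end AskBoth

end Mech2

section Mechanism

variable {M W : Type} [DecidableEq M]
  {C : (M → PrefList W) → (W → PrefList M) → Matching M W} {a b : M}

noncomputable def menPhase (C : (M → PrefList W) → (W → PrefList M) → Matching M W)
    (a b : M) (qbar : W → PrefList M) : Mech2 M W :=
  Mech2.branch a (fun p => ∃ w, Clinches qbar a b p w)
    (Mech2.askBoth a b (C · qbar)) (Mech2.askBoth b a (C · qbar))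

theorem run_menPhase (hall : ∀ m, m = a ∨ m = b) (qbar qbar' : W → PrefList M)
    (pbar : M → PrefList W) : (menPhase C a b qbar).run pbar qbar' = C pbar qbar :=
  Mech2.run_branch (Mech2.run_askBoth hall) (Mech2.run_askBoth fun m => (hall m).symm) _ _

theorem ospAux_menPhase (hC : IsMOptimalStableRule2 C) (hab : a ≠ b)
    (hall : ∀ m, m = a ∨ m = b) (qbar : W → PrefList M) (m : M)
    (P : Set ((M → PrefList W) × (W → PrefList M))) :
    Mech2.OSPAux m (menPhase C a b qbar) P := by
  have hall' : ∀ m, m = b ∨ m = a := fun m => (hall m).symm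
  have hne : Mech2.askBoth a b (C · qbar) ≠ Mech2.askBoth b a (C · qbar) := fun h => by
    injection h
    exact hab ‹_›
  refine Mech2.ospAux_branch hne (Mech2.run_askBoth hall) (Mech2.run_askBoth hall') ?_ ?_ ?_
  · rintro r - r' - ⟨w, hw⟩ hr'
    have hrw := hC.toFun_eq_of_clinches hab hall hw
    refine ⟨?_, ?_⟩
    · rw [hrw, ← hw.1]
      exact (hC _ _).1.not_outPrefers_best_acceptedBy _
    · rw [hrw, hC.toFun_eq_best_available hab hall r'.1]
      exact PrefList.not_outPrefers_best fun x hx => by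
        cases hx
        exact ⟨(PrefList.best_spec hw.1).2, hw.not_clinches hab⟩
  · intro Q hQ
    refine Mech2.ospAux_askBoth hall (fun r hr r' _ => ?_) (hC.strategyProofFor hab.symm hall' qbar)
    obtain ⟨w, hw⟩ := hQ r hr
    rw [hC.toFun_eq_of_clinches hab hall hw, ← hw.1]
    exact (hC _ _).1.not_outPrefers_best_acceptedBy _
  · intro Q hQ
    refine Mech2.ospAux_askBoth hall' (fun r hr r' _ => ?_) (hC.strategyProofFor hab hall qbar)
    rw [hC.toFun_eq_best_acceptedBy hab hall (not_exists.1 (hQ r hr))]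
    exact (hC _ _).1.not_outPrefers_best_acceptedBy _

end Mechanism

/-- If `|M| = 2`, then the two-sides-querying M-optimal stable matching
rule is implemented by some two-sides-querying matching mechanism that is OSP for
every man. -/
theorem two_sided_mOptimal_OSP_of_two_men
    {M W : Type} [Fintype M] [Fintype W]
    (hM : Fintype.card M = 2)
    (C : (M → PrefList W) → (W → PrefList M) → Matching M W)
    (hC : IsMOptimalStableRule2 C) :
    ∃ I : Mech2 M W, (∀ m : M, I.OSPForM m) ∧
      ∀ pbar qbar, I.run pbar qbar = C pbar qbar := by
  classical
  obtain ⟨a, b, hab, huniv⟩ := Finset.card_eq_two.1 hM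
  have hall : ∀ m, m = a ∨ m = b := fun m => by simpa [huniv] using Finset.mem_univ m
  refine ⟨Mech2.queryWomen (menPhase C a b) Finset.univ.toList fun _ => ⟨[], List.nodup_nil⟩,
    fun m => Mech2.ospAux_queryWomen (ospAux_menPhase hC hab hall · m) _ _ _,
    fun pbar qbar => ?_⟩
  rw [Mech2.run_queryWomen pbar qbar _ _ fun w hw => absurd (by simp) hw]
  exact run_menPhase hall qbar qbar pbar
end
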